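/- (Quantifier elimination) Let ψ be a generalized Kracht formula with free variables such that in every atom y ∈ E occurring in ψ, all variables occurring in E are free variables of ψ. Then ψ is equivalent (in every Kripke frame, under every assignment of its free variables, with atoms read via the # translation) to a quantifier-free formula built from atoms x_l ∈ E' with E' quasi-safe, using only ∧ and ∨. -/

import Mathlib

set_option autoImplicit true

universe u v w

/-- Modal formulas over modality indices `Λ` and propositional variables `V`. -/
inductive MF (Λ : Type u) (V : Type v) : Type (max u v)
  | var : V → MF Λ V
  | top : MF Λ V
  | bot : MF Λ V
  | and : MF Λ V → MF Λ V → MF Λ V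
  | or  : MF Λ V → MF Λ V → MF Λ V
  | neg : MF Λ V → MF Λ V
  | imp : MF Λ V → MF Λ V → MF Λ V
  | dia : Λ → MF Λ V → MF Λ V
  | box : Λ → MF Λ V → MF Λ V

namespace MF
variable {Λ : Type u} {V : Type v}

/-- The set of propositional variables occurring in a modal formula. -/
def vars : MF Λ V → Set V
  | var p => {p}
  | top => ∅
  | bot => ∅
  | and a b => vars a ∪ vars b
  | or a b => vars a ∪ vars b
  | neg a => vars a
  | imp a b => vars a ∪ vars b
  | dia _ a => vars a
  | box _ a => vars a

end MF

/-- Positive modal formulas: built without `¬` and `→`. -/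
inductive Positive {Λ : Type u} {V : Type v} : MF Λ V → Prop
  | var (p : V) : Positive (.var p)
  | top : Positive .top
  | bot : Positive .bot
  | and {a b} : Positive a → Positive b → Positive (.and a b)
  | or {a b} : Positive a → Positive b → Positive (.or a b)
  | dia (l) {a} : Positive a → Positive (.dia l a)
  | box (l) {a} : Positive a → Positive (.box l a)

/-- A Kripke frame with accessibility relations indexed by `Λ`. -/
structure Frame (Λ : Type u) where
  W : Type w
  R : Λ → W → W → Prop

/-- Kripke satisfaction `F, x, θ ⊨ φ`. -/
def sat {Λ : Type u} {V : Type v} (F : Frame Λ) (θ : V → Set F.W) : F.W → MF Λ V → Prop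
  | x, .var p => x ∈ θ p
  | _, .top => True
  | _, .bot => False
  | x, .and a b => sat F θ x a ∧ sat F θ x b
  | x, .or a b => sat F θ x a ∨ sat F θ x b
  | x, .neg a => ¬ sat F θ x a
  | x, .imp a b => sat F θ x a → sat F θ x b
  | x, .dia l a => ∃ y, F.R l x y ∧ sat F θ y a
  | x, .box l a => ∀ y, F.R l x y → sat F θ y a

/-- `BoxF φ p S`: `φ` is a box-formula with head `p`, in which the set of variables
occurring not as the head is `S`. -/
inductive BoxF {Λ : Type u} {V : Type v} : MF Λ V → V → Set V → Prop
  | var (p : V) : BoxF (.var p) p ∅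
  | imp {POS ψ p S} : Positive POS → BoxF ψ p S → BoxF (.imp POS ψ) p (MF.vars POS ∪ S)
  | box (l) {ψ p S} : BoxF ψ p S → BoxF (.box l ψ) p S

/-- `RegBF r φ p`: relative to the rank assignment `r`, `φ` is a regular box-formula
with head `p` (of rank `r p`): all variables of the positive antecedents have rank `< r p`. -/
inductive RegBF {Λ : Type u} {V : Type v} (r : V → ℕ) : MF Λ V → V → Prop
  | var (p : V) : RegBF r (.var p) p
  | imp {POS ψ p} : Positive POS → (∀ q ∈ MF.vars POS, r q < r p) →
      RegBF r ψ p → RegBF r (.imp POS ψ) p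
  | box (l) {ψ p} : RegBF r ψ p → RegBF r (.box l ψ) p

/-- The edge relation of the dependency graph of a set `A` of box-formulas:
`p → q` iff `p` occurs (not as the head) in some member of `A` with head `q`. -/
def depEdge {Λ : Type u} {V : Type v} (A : Set (MF Λ V)) (p q : V) : Prop :=
  ∃ φ ∈ A, ∃ S, BoxF φ q S ∧ p ∈ S

/-- A set of box-formulas is regular if its dependency graph has no oriented cycle. -/
def RegularSet {Λ : Type u} {V : Type v} (A : Set (MF Λ V)) : Prop :=
  ∀ p : V, ¬ Relation.TransGen (depEdge A) p p

/-- `R_λ^{-1}(A) = {u : ∃ v, u R_λ v ∧ v ∈ A}`. -/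
def Rinv {Λ : Type u} (F : Frame Λ) (l : Λ) (A : Set F.W) : Set F.W :=
  {u | ∃ v, F.R l u v ∧ v ∈ A}

/-- `R_λ^□(A) = {u : ∀ v, u R_λ v → v ∈ A}`. -/
def RboxOp {Λ : Type u} (F : Frame Λ) (l : Λ) (A : Set F.W) : Set F.W :=
  {u | ∀ v, F.R l u v → v ∈ A}

/-- `R_λ(A) = {u : ∃ v, v R_λ u ∧ v ∈ A}`. -/
def Rfwd {Λ : Type u} (F : Frame Λ) (l : Λ) (A : Set F.W) : Set F.W :=
  {u | ∃ v, F.R l v u ∧ v ∈ A}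

/-- The interpretation of the expression `KP^{POS}` in a frame `F`, the set variables
`P^l_i` being interpreted by `P`.  (Junk value `∅` on non-positive constructors.) -/
def KPsem {Λ : Type u} (F : Frame Λ) (P : ℕ × ℕ → Set F.W) : MF Λ (ℕ × ℕ) → Set F.W
  | .var q => P q
  | .top => Set.univ
  | .bot => ∅
  | .and a b => KPsem F P a ∩ KPsem F P b
  | .or a b => KPsem F P a ∪ KPsem F P b
  | .dia l a => Rinv F l (KPsem F P a)
  | .box l a => RboxOp F l (KPsem F P a)
  | .neg _ => ∅
  | .imp _ _ => ∅

/-- The interpretation of the expression `KV^φ` in a frame `F`: the set variables `P^l_i`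
are interpreted by `P` and the extra variable `#` by the second argument.
(Junk value `∅` on constructors that do not occur in regular box-formulas.) -/
def KVsem {Λ : Type u} (F : Frame Λ) (P : ℕ × ℕ → Set F.W) : MF Λ (ℕ × ℕ) → Set F.W → Set F.W
  | .var _, X => X
  | .imp POS ψ, X => KVsem F P ψ (X ∩ KPsem F P POS)
  | .box l ψ, X => KVsem F P ψ (Rfwd F l X)
  | _, _ => ∅

/-- The semantic minimal valuation: given points `g j` and sets `f j` of regular
box-formulas to be verified at `g j`, `thetaMinSem F g f k i` is the minimal value of the
variable `p^k_i`; it is defined by recursion on the rank `k` as the union, over all `j` and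
all `φ ∈ f j` with head `p^k_i`, of `KV^φ(g j)` computed with the minimal values of the
variables of lower rank. -/
noncomputable def thetaMinSem {Λ : Type u} (F : Frame Λ) {ι : Type w} (g : ι → F.W)
    (f : ι → Set (MF Λ (ℕ × ℕ))) : ℕ → ℕ → Set F.W :=
  fun k => Nat.strongRecOn (motive := fun _ => ℕ → Set F.W) k fun k ih i =>
    ⋃ (j : ι), ⋃ φ ∈ f j, ⋃ (_ : RegBF Prod.fst φ (k, i)),
      KVsem F (fun q => if h : q.1 < k then ih q.1 h q.2 else ∅) φ {g j}

/-- `L`-expressions: terms of the language `L` with individual variables `x_i` (`i : ℕ`),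
constants `⊤, ⊥`, unary `R_λ^{-1}`, `R_λ^□`, `R_λ` and binary `∩`, `∪`. -/
inductive LExp (Λ : Type u) : Type u
  | var : ℕ → LExp Λ
  | top : LExp Λ
  | bot : LExp Λ
  | inter : LExp Λ → LExp Λ → LExp Λ
  | union : LExp Λ → LExp Λ → LExp Λ
  | rinv : Λ → LExp Λ → LExp Λ
  | rbox : Λ → LExp Λ → LExp Λ
  | rfw : Λ → LExp Λ → LExp Λ

namespace LExp
variable {Λ : Type u}

/-- Denotation of an `L`-expression in a frame `F`, the variable `x_i` denoting the
singleton of the point `g i`. -/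
def den (F : Frame Λ) (g : ℕ → F.W) : LExp Λ → Set F.W
  | var i => {g i}
  | top => Set.univ
  | bot => ∅
  | inter a b => den F g a ∩ den F g b
  | union a b => den F g a ∪ den F g b
  | rinv l a => Rinv F l (den F g a)
  | rbox l a => RboxOp F l (den F g a)
  | rfw l a => Rfwd F l (den F g a)

/-- The set of (indices of) individual variables occurring in an `L`-expression. -/
def evars : LExp Λ → Set ℕ
  | var i => {i}
  | top => ∅
  | bot => ∅
  | inter a b => evars a ∪ evars b
  | union a b => evars a ∪ evars b
  | rinv _ a => evars a
  | rbox _ a => evars a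
  | rfw _ a => evars a

end LExp

/-- The subexpression relation on `L`-expressions. -/
inductive Subexp {Λ : Type u} : LExp Λ → LExp Λ → Prop
  | refl (e : LExp Λ) : Subexp e e
  | interL {e a b} : Subexp e a → Subexp e (.inter a b)
  | interR {e a b} : Subexp e b → Subexp e (.inter a b)
  | unionL {e a b} : Subexp e a → Subexp e (.union a b)
  | unionR {e a b} : Subexp e b → Subexp e (.union a b)
  | rinv (l) {e a} : Subexp e a → Subexp e (.rinv l a)
  | rbox (l) {e a} : Subexp e a → Subexp e (.rbox l a)
  | rfw (l) {e a} : Subexp e a → Subexp e (.rfw l a)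

/-- `SafeFor e`: `e` is "safe for" the ambient expression, i.e. `e` is a variable, or
`R_λ(e')` with `e'` safe for it, or an intersection one of whose components is safe for it. -/
inductive SafeFor {Λ : Type u} : LExp Λ → Prop
  | var (i : ℕ) : SafeFor (.var i)
  | rfw (l) {a} : SafeFor a → SafeFor (.rfw l a)
  | interL {a b} : SafeFor a → SafeFor (.inter a b)
  | interR {a b} : SafeFor b → SafeFor (.inter a b)

/-- An `L`-expression is safe if it is safe for itself and the argument of every
subexpression of the form `R_λ(ψ)` is safe for it. -/
def Safe {Λ : Type u} (e : LExp Λ) : Prop :=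
  SafeFor e ∧ ∀ l a, Subexp (.rfw l a) e → SafeFor a

mutual
  /-- The class `K`: the least class of `L`-expressions containing the variables and closed
  under `S ↦ R_λ(S)` and `S ↦ S ∩ E` for `E` a positive combination of members of `K`. -/
  inductive InK {Λ : Type u} : LExp Λ → Prop
    | var (i : ℕ) : InK (.var i)
    | rfw (l : Λ) {S : LExp Λ} : InK S → InK (.rfw l S)
    | inter {S E : LExp Λ} : InK S → PosOfK E → InK (.inter S E)
  /-- Positive combinations of members of `K`: built from members of `K` using only
  `∩`, `∪`, `R_λ^{-1}`, `R_λ^□`, `⊤`, `⊥`. -/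
  inductive PosOfK {Λ : Type u} : LExp Λ → Prop
    | ofK {e : LExp Λ} : InK e → PosOfK e
    | top : PosOfK .top
    | bot : PosOfK .bot
    | inter {a b} : PosOfK a → PosOfK b → PosOfK (.inter a b)
    | union {a b} : PosOfK a → PosOfK b → PosOfK (.union a b)
    | rinv (l) {a} : PosOfK a → PosOfK (.rinv l a)
    | rbox (l) {a} : PosOfK a → PosOfK (.rbox l a)
end

/-- Quasi-safe `L`-expressions: positive combinations of safe expressions, i.e. built from
safe expressions using only `∩`, `∪`, `R_λ^{-1}`, `R_λ^□`, `⊤`, `⊥`. -/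
inductive QuasiSafe {Λ : Type u} : LExp Λ → Prop
  | safe {e : LExp Λ} : Safe e → QuasiSafe e
  | top : QuasiSafe .top
  | bot : QuasiSafe .bot
  | inter {a b} : QuasiSafe a → QuasiSafe b → QuasiSafe (.inter a b)
  | union {a b} : QuasiSafe a → QuasiSafe b → QuasiSafe (.union a b)
  | rinv (l) {a} : QuasiSafe a → QuasiSafe (.rinv l a)
  | rbox (l) {a} : QuasiSafe a → QuasiSafe (.rbox l a)

/-- `ReplOne i ψ φ φ'`: `φ'` is the result of replacing one occurrence of the variable
`x_i` in `φ` by `ψ`. -/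
inductive ReplOne {Λ : Type u} (i : ℕ) (ψ : LExp Λ) : LExp Λ → LExp Λ → Prop
  | here : ReplOne i ψ (.var i) ψ
  | interL {a a' b} : ReplOne i ψ a a' → ReplOne i ψ (.inter a b) (.inter a' b)
  | interR {a b b'} : ReplOne i ψ b b' → ReplOne i ψ (.inter a b) (.inter a b')
  | unionL {a a' b} : ReplOne i ψ a a' → ReplOne i ψ (.union a b) (.union a' b)
  | unionR {a b b'} : ReplOne i ψ b b' → ReplOne i ψ (.union a b) (.union a b')
  | rinv (l) {a a'} : ReplOne i ψ a a' → ReplOne i ψ (.rinv l a) (.rinv l a')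
  | rbox (l) {a a'} : ReplOne i ψ a a' → ReplOne i ψ (.rbox l a) (.rbox l a')
  | rfw (l) {a a'} : ReplOne i ψ a a' → ReplOne i ψ (.rfw l a) (.rfw l a')

/-- A finite union of `L`-expressions (empty union is `⊥`). -/
def unionList {Λ : Type u} : List (LExp Λ) → LExp Λ
  | [] => .bot
  | e :: es => .union e (unionList es)

/-- `UnionOfSafe e`: `e` is a finite union of safe expressions. -/
inductive UnionOfSafe {Λ : Type u} : LExp Λ → Prop
  | bot : UnionOfSafe .bot
  | safe {e : LExp Λ} : Safe e → UnionOfSafe e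
  | union {a b} : UnionOfSafe a → UnionOfSafe b → UnionOfSafe (.union a b)

/-- Syntactic `KP^{POS}`: the `L`-expression obtained from the positive formula `POS` by
replacing each set variable `P^l_i` by the `L`-expression `KF (l, i)`.
(Junk value on non-positive constructors.) -/
def KPsub {Λ : Type u} (KF : ℕ × ℕ → LExp Λ) : MF Λ (ℕ × ℕ) → LExp Λ
  | .var q => KF q
  | .top => .top
  | .bot => .bot
  | .and a b => .inter (KPsub KF a) (KPsub KF b)
  | .or a b => .union (KPsub KF a) (KPsub KF b)
  | .dia l a => .rinv l (KPsub KF a)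
  | .box l a => .rbox l (KPsub KF a)
  | .neg _ => .bot
  | .imp _ _ => .bot

/-- Syntactic `KVF^φ(t)`: the `L`-expression obtained from `KV^φ` by substituting the
`L`-expression `t` for `#` and `KF (l, i)` for each set variable `P^l_i`.
(Junk value on constructors that do not occur in regular box-formulas.) -/
def KVFsyn {Λ : Type u} (KF : ℕ × ℕ → LExp Λ) : MF Λ (ℕ × ℕ) → LExp Λ → LExp Λ
  | .var _, t => t
  | .imp POS ψ, t => KVFsyn KF ψ (.inter t (KPsub KF POS))
  | .box l ψ, t => KVFsyn KF ψ (.rfw l t)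
  | _, _ => .bot

open scoped Classical in
/-- The syntactic minimal valuation `KF_f^{p^k_i}` for variables `x_0, …, x_{n-1}` and
`f` assigning to each variable a finite set of regular box-formulas: defined by recursion on
the rank `k` as the union, over all `j < n` and all `φ ∈ f j` with head `p^k_i`, of
`KVF_f^φ(x_j)`, which is `KV^φ` with `x_j` substituted for `#` and `KF_f^{p^l_m}`
substituted for each `P^l_m` with `l < k`. -/
noncomputable def KFsyn {Λ : Type u} (n : ℕ) (f : ℕ → Finset (MF Λ (ℕ × ℕ))) :
    ℕ → ℕ → LExp Λ :=
  fun k => Nat.strongRecOn (motive := fun _ => ℕ → LExp Λ) k fun k ih i =>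
    unionList (((List.range n).flatMap fun j =>
      ((f j).toList.filter fun φ => decide (RegBF Prod.fst φ (k, i))).map fun φ =>
        KVFsyn (fun q => if h : q.1 < k then ih q.1 h q.2 else LExp.bot) φ (LExp.var j)))

/-- The expressions substituted for the set variables `P^l_m`, `l < k`, in `KVF`:
the syntactic minimal valuations of the lower ranks. -/
noncomputable def lowKF {Λ : Type u} (n : ℕ) (f : ℕ → Finset (MF Λ (ℕ × ℕ))) (k : ℕ) :
    ℕ × ℕ → LExp Λ :=
  fun q => if q.1 < k then KFsyn n f q.1 q.2 else LExp.bot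

/-- `KVFat n f φ j k` is the `L`-expression `KVF_f^φ(x_j)` for `φ` a regular box-formula
of rank `k`. -/
noncomputable def KVFat {Λ : Type u} (n : ℕ) (f : ℕ → Finset (MF Λ (ℕ × ℕ)))
    (φ : MF Λ (ℕ × ℕ)) (j k : ℕ) : LExp Λ :=
  KVFsyn (lowKF n f k) φ (.var j)

/-- A labelled tree-like structure: a set of vertices with relations indexed by `Λ`,
a root, and a label function assigning to every vertex a set of labels from `α`. -/
structure LabTree (Λ : Type u) (α : Type v) where
  V : Type
  R : Λ → V → V → Prop
  root : V
  label : V → Set α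

/-- Derivation trees witnessing that a formula is built from base formulas using only
`∧` and `◇_λ`. -/
inductive BuiltT (Λ : Type u) (V : Type v) : Type (max u v)
  | base : MF Λ V → BuiltT Λ V
  | and : BuiltT Λ V → BuiltT Λ V → BuiltT Λ V
  | dia : Λ → BuiltT Λ V → BuiltT Λ V

/-- The modal formula described by a derivation tree. -/
def BuiltT.formula {Λ : Type u} {V : Type v} : BuiltT Λ V → MF Λ V
  | base φ => φ
  | and a b => .and a.formula b.formula
  | dia l a => .dia l a.formula

/-- The derivation tree uses only base formulas from `A`. -/
def BuiltT.Ok {Λ : Type u} {V : Type v} (A : Set (MF Λ V)) : BuiltT Λ V → Prop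
  | base φ => φ ∈ A
  | and a b => a.Ok A ∧ b.Ok A
  | dia _ a => a.Ok A

/-- Helper for gluing two labelled trees at their roots: the relation on the disjoint sum,
with the edges out of the second root re-attached to the first root. -/
def glueR {Λ : Type u} {W₁ W₂ : Type} (R₁ : Λ → W₁ → W₁ → Prop) (R₂ : Λ → W₂ → W₂ → Prop)
    (r₁ : W₁) (r₂ : W₂) (l : Λ) : W₁ ⊕ W₂ → W₁ ⊕ W₂ → Prop
  | Sum.inl a, Sum.inl b => R₁ l a b
  | Sum.inr a, Sum.inr b => R₂ l a b
  | Sum.inl a, Sum.inr b => a = r₁ ∧ R₂ l r₂ b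
  | Sum.inr _, Sum.inl _ => False

open Classical in
/-- Helper for gluing two labelled trees at their roots: the label function, the glued root
receiving the union of the two root labels. -/
noncomputable def glueLab {α : Type w} {W₁ W₂ : Type} (L₁ : W₁ → Set α) (L₂ : W₂ → Set α)
    (r₁ : W₁) (r₂ : W₂) : W₁ ⊕ W₂ → Set α
  | Sum.inl a => if a = r₁ then L₁ r₁ ∪ L₂ r₂ else L₁ a
  | Sum.inr b => L₂ b

/-- Helper for prefixing a labelled tree with a new root: the relation on `Option W`,
with an `R_{l₀}`-edge from the new root `none` to the old root `r`. -/
def prefR {Λ : Type u} {W : Type} (R : Λ → W → W → Prop) (l₀ : Λ) (r : W) (l : Λ) :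
    Option W → Option W → Prop
  | none, some w => l = l₀ ∧ w = r
  | some a, some b => R l a b
  | _, _ => False

/-- Helper for prefixing a labelled tree with a new root: the label function, the new root
getting the empty label. -/
def prefLab {α : Type w} {W : Type} (L : W → Set α) : Option W → Set α
  | none => ∅
  | some a => L a

/-- The reduced syntactical tree of a formula built from base formulas using `∧` and `◇_λ`:
a single root labelled `{a}` for a base formula `a`; for a conjunction, the two trees
with their roots identified (labels united); for `◇_λ ψ`, a new root with empty label and an
`R_λ`-edge to the root of the tree of `ψ`. -/
noncomputable def TreeOf {Λ : Type u} {V : Type v} : BuiltT Λ V → LabTree Λ (MF Λ V)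
  | .base φ =>
      { V := Unit, R := fun _ _ _ => False, root := (), label := fun _ => {φ} }
  | .and b₁ b₂ =>
      let T₁ := TreeOf b₁
      let T₂ := TreeOf b₂
      { V := {v : T₁.V ⊕ T₂.V // v ≠ Sum.inr T₂.root},
        R := fun l u v => glueR T₁.R T₂.R T₁.root T₂.root l u.1 v.1,
        root := ⟨Sum.inl T₁.root, by exact Sum.inl_ne_inr⟩,
        label := fun v => glueLab T₁.label T₂.label T₁.root T₂.root v.1 }
  | .dia l b =>
      let T := TreeOf b
      { V := Option T.V,
        R := fun l' u v => prefR T.R l T.root l' u v,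
        root := none,
        label := fun v => prefLab T.label v }

/-- Restrictedly positive first-order formulas over the frame language: built from atoms
`y ∈ E` (`E` an `L`-expression) using `∧`, `∨` and the restricted quantifiers
`(∀ y ◁_λ x)` and `(∃ y ◁_λ x)`. -/
inductive KrF (Λ : Type u) : Type u
  | atom : ℕ → LExp Λ → KrF Λ
  | and : KrF Λ → KrF Λ → KrF Λ
  | or : KrF Λ → KrF Λ → KrF Λ
  | all : ℕ → Λ → ℕ → KrF Λ → KrF Λ
  | ex : ℕ → Λ → ℕ → KrF Λ → KrF Λ

namespace KrF
variable {Λ : Type u}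

/-- Truth of a restrictedly positive formula in a frame under an assignment `g` of points to
individual variables; the atom `y ∈ E` is read via the `#`-translation, i.e. as membership
of `g y` in the denotation of `E`. -/
def holds (F : Frame Λ) : (ℕ → F.W) → KrF Λ → Prop
  | g, atom y E => g y ∈ E.den F g
  | g, and a b => holds F g a ∧ holds F g b
  | g, or a b => holds F g a ∨ holds F g b
  | g, all y l x β => ∀ w, F.R l (g x) w → holds F (Function.update g y w) β
  | g, ex y l x β => ∃ w, F.R l (g x) w ∧ holds F (Function.update g y w) β

/-- Free variables. -/
def fv : KrF Λ → Set ℕ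
  | atom y E => insert y E.evars
  | and a b => fv a ∪ fv b
  | or a b => fv a ∪ fv b
  | all y _ x β => insert x (fv β \ {y})
  | ex y _ x β => insert x (fv β \ {y})

/-- Bound variables. -/
def bv : KrF Λ → Set ℕ
  | atom _ _ => ∅
  | and a b => bv a ∪ bv b
  | or a b => bv a ∪ bv b
  | all y _ _ β => insert y (bv β)
  | ex y _ _ β => insert y (bv β)

/-- No two distinct quantifier occurrences bind the same variable. -/
def CleanBound : KrF Λ → Prop
  | atom _ _ => True
  | and a b => CleanBound a ∧ CleanBound b ∧ bv a ∩ bv b = ∅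
  | or a b => CleanBound a ∧ CleanBound b ∧ bv a ∩ bv b = ∅
  | all y _ _ β => CleanBound β ∧ y ∉ bv β
  | ex y _ _ β => CleanBound β ∧ y ∉ bv β

/-- Clean formulas: no variable occurs both free and bound, and no two distinct quantifier
occurrences bind the same variable. -/
def Clean (φ : KrF Λ) : Prop := fv φ ∩ bv φ = ∅ ∧ CleanBound φ

/-- All the `L`-expressions occurring in atoms of the formula satisfy `P`. -/
def AtomsAll (P : LExp Λ → Prop) : KrF Λ → Prop
  | atom _ E => P E
  | and a b => AtomsAll P a ∧ AtomsAll P b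
  | or a b => AtomsAll P a ∧ AtomsAll P b
  | all _ _ _ β => AtomsAll P β
  | ex _ _ _ β => AtomsAll P β

/-- Quantifier-free formulas (built from atoms using only `∧` and `∨`). -/
def QFree : KrF Λ → Prop
  | atom _ _ => True
  | and a b => QFree a ∧ QFree b
  | or a b => QFree a ∧ QFree b
  | all _ _ _ _ => False
  | ex _ _ _ _ => False

/-- Formulas built from atoms using only `∧`, `∨` and restricted universal quantification
(no existential quantifier). -/
def NoEx : KrF Λ → Prop
  | atom _ _ => True
  | and a b => NoEx a ∧ NoEx b
  | or a b => NoEx a ∧ NoEx b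
  | all _ _ _ β => NoEx β
  | ex _ _ _ _ => False

/-- `GKok U e φ`: every variable occurring in an `L`-expression of an atom of `φ` is
inherently universal. Here `U` is the set of variables that are inherently universal so far
(initially the free variables) and `e` records whether we are within the scope of an
existential quantifier. -/
def GKok : Set ℕ → Bool → KrF Λ → Prop
  | U, _, atom _ E => E.evars ⊆ U
  | U, e, and a b => GKok U e a ∧ GKok U e b
  | U, e, or a b => GKok U e a ∧ GKok U e b
  | U, false, all y _ _ β => GKok (insert y U) false β
  | U, true, all _ _ _ β => GKok U true β
  | U, _, ex _ _ _ β => GKok U true β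

end KrF

/-- A generalized Kracht formula with free variables: clean, restrictedly positive with safe
atoms, and in every atom `y ∈ E` all variables of `E` are inherently universal. -/
def IsGenKrachtFV {Λ : Type u} (α : KrF Λ) : Prop :=
  α.Clean ∧ α.AtomsAll Safe ∧ α.GKok α.fv false

/-- A generalized Kracht formula: a generalized Kracht formula with free variables whose
only free variable is `x0`. -/
def IsGenKracht {Λ : Type u} (α : KrF Λ) (x0 : ℕ) : Prop :=
  IsGenKrachtFV α ∧ α.fv = {x0}

/-- Generalized Sahlqvist antecedents: built from regular box-formulas and negative
formulas using only `∧`, `∨`, `◇_λ`. -/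
inductive GSAnt {Λ : Type u} : MF Λ (ℕ × ℕ) → Prop
  | reg {φ p} : RegBF Prod.fst φ p → GSAnt φ
  | neg {φ} : Positive φ → GSAnt (.neg φ)
  | and {a b} : GSAnt a → GSAnt b → GSAnt (.and a b)
  | or {a b} : GSAnt a → GSAnt b → GSAnt (.or a b)
  | dia (l) {a} : GSAnt a → GSAnt (.dia l a)

/-- Generalized Sahlqvist formulas: built from generalized Sahlqvist implications
`GSA → ⊥` by applying boxes and conjunctions, and disjunctions only to formulas without
common propositional variables. -/
inductive GSF {Λ : Type u} : MF Λ (ℕ × ℕ) → Prop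
  | impl {a} : GSAnt a → GSF (.imp a .bot)
  | box (l) {a} : GSF a → GSF (.box l a)
  | and {a b} : GSF a → GSF b → GSF (.and a b)
  | or {a b} : GSF a → GSF b → MF.vars a ∩ MF.vars b = ∅ → GSF (.or a b)

open Classical in
/-- The modal translation `E^T` of a quasi-safe expression: safe subexpressions are
replaced by their associated propositional variables `p_E`, and `∩, ∪, R^{-1}_λ, R^□_λ`
become `∧, ∨, ◇_λ, □_λ`. -/
noncomputable def Etrans {Λ : Type u} (pE : LExp Λ → ℕ × ℕ) : LExp Λ → MF Λ (ℕ × ℕ)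
  | .var i => .var (pE (.var i))
  | .top => .top
  | .bot => .bot
  | .inter a b =>
      if Safe (LExp.inter a b) then .var (pE (.inter a b))
      else .and (Etrans pE a) (Etrans pE b)
  | .union a b =>
      if Safe (LExp.union a b) then .var (pE (.union a b))
      else .or (Etrans pE a) (Etrans pE b)
  | .rinv l a =>
      if Safe (LExp.rinv l a) then .var (pE (.rinv l a)) else .dia l (Etrans pE a)
  | .rbox l a =>
      if Safe (LExp.rbox l a) then .var (pE (.rbox l a)) else .box l (Etrans pE a)
  | .rfw l a => if Safe (LExp.rfw l a) then .var (pE (.rfw l a)) else .bot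

/-- A finite disjunction of modal formulas (empty disjunction is `⊥`). -/
def orList {Λ : Type u} {V : Type v} : List (MF Λ V) → MF Λ V
  | [] => .bot
  | a :: as => .or a (orList as)


/-! In a clean formula whose atoms mention only free variables, a bound variable `y` occurs in
atoms only as their subject. So once the quantifiers inside `β` are eliminated, `β` is a positive
Boolean combination of atoms `y ∈ E` and of atoms not mentioning `y`. Such a formula can be
written as `⋁ᵢ (Cᵢ ∧ y ∈ Eᵢ)` with `Cᵢ` free of `y`, and then `(∃ y ◁_λ x) β` is
`⋁ᵢ (Cᵢ ∧ x ∈ R_λ^{-1}(Eᵢ))`; dually, `β` is `⋀ᵢ (Cᵢ ∨ y ∈ Eᵢ)` and `(∀ y ◁_λ x) β` is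
`⋀ᵢ (Cᵢ ∨ x ∈ R_λ^□(Eᵢ))`. The new expressions are built from the old ones by `∩, ∪, R_λ^{-1},
R_λ^□`, so they stay quasi-safe and mention only free variables. -/

namespace LExp
variable {Λ : Type u}

structure PosClosed (P : LExp Λ → Prop) : Prop where
  top : P .top
  bot : P .bot
  inter {a b : LExp Λ} : P a → P b → P (.inter a b)
  union {a b : LExp Λ} : P a → P b → P (.union a b)
  rinv (l : Λ) {a : LExp Λ} : P a → P (.rinv l a)
  rbox (l : Λ) {a : LExp Λ} : P a → P (.rbox l a)

theorem posClosed_quasiSafe : PosClosed (QuasiSafe (Λ := Λ)) :=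
  ⟨.top, .bot, .inter, .union, .rinv, .rbox⟩

theorem posClosed_evars_subset (S : Set ℕ) : PosClosed fun E : LExp Λ => E.evars ⊆ S :=
  ⟨Set.empty_subset _, Set.empty_subset _, Set.union_subset, Set.union_subset,
    fun _ _ h => h, fun _ _ h => h⟩

theorem den_update_of_notMem {F : Frame Λ} {g : ℕ → F.W} {y : ℕ} {w : F.W} {E : LExp Λ}
    (h : y ∉ E.evars) : E.den F (Function.update g y w) = E.den F g := by
  induction E with
  | var i =>
    rw [evars, Set.mem_singleton_iff] at h
    simp only [den, Function.update_of_ne (Ne.symm h)]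
  | top | bot => rfl
  | inter a b iha ihb | union a b iha ihb =>
    rw [evars, Set.mem_union, not_or] at h
    simp only [den, iha h.1, ihb h.2]
  | rinv l a ih | rbox l a ih | rfw l a ih => simp only [den, ih h]

end LExp

namespace KrF
variable {Λ : Type u}

theorem AtomsAll.mono {P Q : LExp Λ → Prop} (hPQ : ∀ E, P E → Q E) :
    ∀ {φ : KrF Λ}, φ.AtomsAll P → φ.AtomsAll Q
  | atom _ E, h => hPQ E h
  | and _ _, h | or _ _, h => ⟨h.1.mono hPQ, h.2.mono hPQ⟩
  | all _ _ _ β, h | ex _ _ _ β, h => AtomsAll.mono hPQ (φ := β) h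

def verum : KrF Λ := atom 0 .top

def falsum : KrF Λ := atom 0 .bot

def bigOr : List (KrF Λ) → KrF Λ
  | [] => falsum
  | φ :: φs => or φ (bigOr φs)

def bigAnd : List (KrF Λ) → KrF Λ
  | [] => verum
  | φ :: φs => and φ (bigAnd φs)

section Connectives
variable {F : Frame Λ} {g : ℕ → F.W}

@[simp] theorem holds_verum : holds F g verum := Set.mem_univ _

@[simp] theorem holds_falsum : ¬ holds F g falsum := Set.notMem_empty _

@[simp] theorem holds_bigOr {L : List (KrF Λ)} : holds F g (bigOr L) ↔ ∃ φ ∈ L, holds F g φ := by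
  induction L with
  | nil => simp [bigOr]
  | cons φ φs ih => simp [bigOr, holds, ih]

@[simp] theorem holds_bigAnd {L : List (KrF Λ)} :
    holds F g (bigAnd L) ↔ ∀ φ ∈ L, holds F g φ := by
  induction L with
  | nil => simp [bigAnd]
  | cons φ φs ih => simp [bigAnd, holds, ih]

end Connectives

theorem qFree_bigOr {L : List (KrF Λ)} (h : ∀ φ ∈ L, φ.QFree) : (bigOr L).QFree := by
  induction L with
  | nil => trivial
  | cons φ φs ih => exact ⟨h φ (by simp), ih fun ψ hψ => h ψ (by simp [hψ])⟩

theorem qFree_bigAnd {L : List (KrF Λ)} (h : ∀ φ ∈ L, φ.QFree) : (bigAnd L).QFree := by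
  induction L with
  | nil => trivial
  | cons φ φs ih => exact ⟨h φ (by simp), ih fun ψ hψ => h ψ (by simp [hψ])⟩

theorem atomsAll_bigOr {P : LExp Λ → Prop} (hbot : P .bot) {L : List (KrF Λ)}
    (h : ∀ φ ∈ L, φ.AtomsAll P) : (bigOr L).AtomsAll P := by
  induction L with
  | nil => exact hbot
  | cons φ φs ih => exact ⟨h φ (by simp), ih fun ψ hψ => h ψ (by simp [hψ])⟩

theorem atomsAll_bigAnd {P : LExp Λ → Prop} (htop : P .top) {L : List (KrF Λ)}
    (h : ∀ φ ∈ L, φ.AtomsAll P) : (bigAnd L).AtomsAll P := by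
  induction L with
  | nil => exact htop
  | cons φ φs ih => exact ⟨h φ (by simp), ih fun ψ hψ => h ψ (by simp [hψ])⟩

def exSplit (y : ℕ) : KrF Λ → List (KrF Λ × LExp Λ)
  | atom z E => if z = y then [(verum, E)] else [(atom z E, .top)]
  | and a b => (exSplit y a ×ˢ exSplit y b).map fun ((C, E), (D, E')) => (C.and D, E.inter E')
  | or a b => exSplit y a ++ exSplit y b
  | _ => []

def allSplit (y : ℕ) : KrF Λ → List (KrF Λ × LExp Λ)
  | atom z E => if z = y then [(falsum, E)] else [(atom z E, .bot)]
  | and a b => allSplit y a ++ allSplit y b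
  | or a b => (allSplit y a ×ˢ allSplit y b).map fun ((C, E), (D, E')) => (C.or D, E.union E')
  | _ => []

section Split
variable {F : Frame Λ} {g : ℕ → F.W} {y : ℕ} {w : F.W}

theorem holds_update_iff_exSplit : ∀ {φ : KrF Λ}, φ.QFree → φ.AtomsAll (y ∉ ·.evars) →
    (holds F (Function.update g y w) φ ↔ ∃ p ∈ exSplit y φ, holds F g p.1 ∧ w ∈ p.2.den F g)
  | atom z E, _, hy => by
    by_cases hz : z = y
    · subst hz
      simp [exSplit, holds, LExp.den_update_of_notMem hy]
    · simp [exSplit, holds, hz, LExp.den_update_of_notMem hy, LExp.den]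
  | and a b, hq, hy => by
    simp only [holds, exSplit, holds_update_iff_exSplit hq.1 hy.1,
      holds_update_iff_exSplit hq.2 hy.2, List.mem_map, List.mem_product, Prod.exists]
    constructor
    · rintro ⟨⟨C, E, hCE, hC, hE⟩, ⟨D, E', hDE, hD, hE'⟩⟩
      exact ⟨_, _, ⟨C, E, D, E', ⟨hCE, hDE⟩, rfl⟩, ⟨hC, hD⟩, hE, hE'⟩
    · rintro ⟨_, _, ⟨C, E, D, E', ⟨hCE, hDE⟩, hpair⟩, hCD, hEE'⟩
      cases hpair
      exact ⟨⟨C, E, hCE, hCD.1, hEE'.1⟩, ⟨D, E', hDE, hCD.2, hEE'.2⟩⟩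
  | or a b, hq, hy => by
    simp only [holds, exSplit, holds_update_iff_exSplit hq.1 hy.1,
      holds_update_iff_exSplit hq.2 hy.2, List.mem_append, or_and_right, exists_or]

theorem holds_update_iff_allSplit : ∀ {φ : KrF Λ}, φ.QFree → φ.AtomsAll (y ∉ ·.evars) →
    (holds F (Function.update g y w) φ ↔ ∀ p ∈ allSplit y φ, holds F g p.1 ∨ w ∈ p.2.den F g)
  | atom z E, _, hy => by
    by_cases hz : z = y
    · subst hz
      simp [allSplit, holds, LExp.den_update_of_notMem hy]
    · simp [allSplit, holds, hz, LExp.den_update_of_notMem hy, LExp.den]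
  | and a b, hq, hy => by
    simp only [holds, allSplit, holds_update_iff_allSplit hq.1 hy.1,
      holds_update_iff_allSplit hq.2 hy.2, List.mem_append, or_imp, forall_and]
  | or a b, hq, hy => by
    simp only [holds, allSplit, holds_update_iff_allSplit hq.1 hy.1,
      holds_update_iff_allSplit hq.2 hy.2, List.mem_map, List.mem_product, Prod.forall,
      Prod.exists, Prod.mk.injEq]
    constructor
    · rintro (ha | hb) _ _ ⟨C, E, D, E', ⟨hCE, hDE⟩, rfl, rfl⟩
      · rcases ha C E hCE with hC | hE
        exacts [Or.inl (Or.inl hC), Or.inr (Or.inl hE)]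
      · rcases hb D E' hDE with hD | hE'
        exacts [Or.inl (Or.inr hD), Or.inr (Or.inr hE')]
    · intro h
      by_contra! hn
      obtain ⟨C, E, hCE, hC, hE⟩ := hn.1
      obtain ⟨D, E', hDE, hD, hE'⟩ := hn.2
      rcases h _ _ ⟨C, E, D, E', ⟨hCE, hDE⟩, rfl, rfl⟩ with hCD | hEE'
      exacts [hCD.elim hC hD, hEE'.elim hE hE']

end Split

theorem exSplit_fst_qFree {y : ℕ} : ∀ {φ : KrF Λ}, ∀ p ∈ exSplit y φ, p.1.QFree
  | atom z E, p, hp => by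
    unfold exSplit at hp
    split_ifs at hp <;> simp_all [verum, QFree]
  | and a b, _, hp => by
    simp only [exSplit, List.mem_map, List.mem_product, Prod.exists] at hp
    obtain ⟨C, E, D, E', ⟨hCE, hDE⟩, rfl⟩ := hp
    exact ⟨exSplit_fst_qFree _ hCE, exSplit_fst_qFree _ hDE⟩
  | or a b, p, hp => (List.mem_append.1 hp).elim (exSplit_fst_qFree p) (exSplit_fst_qFree p)

theorem allSplit_fst_qFree {y : ℕ} : ∀ {φ : KrF Λ}, ∀ p ∈ allSplit y φ, p.1.QFree
  | atom z E, p, hp => by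
    unfold allSplit at hp
    split_ifs at hp <;> simp_all [falsum, QFree]
  | and a b, p, hp => (List.mem_append.1 hp).elim (allSplit_fst_qFree p) (allSplit_fst_qFree p)
  | or a b, _, hp => by
    simp only [allSplit, List.mem_map, List.mem_product, Prod.exists] at hp
    obtain ⟨C, E, D, E', ⟨hCE, hDE⟩, rfl⟩ := hp
    exact ⟨allSplit_fst_qFree _ hCE, allSplit_fst_qFree _ hDE⟩

theorem atomsAll_exSplit {P : LExp Λ → Prop} (hP : LExp.PosClosed P) {y : ℕ} :
    ∀ {φ : KrF Λ}, φ.AtomsAll P → ∀ p ∈ exSplit y φ, p.1.AtomsAll P ∧ P p.2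
  | atom z E, h, p, hp => by
    unfold exSplit at hp
    split_ifs at hp <;> simp_all [verum, AtomsAll, hP.top]
  | and a b, h, _, hp => by
    simp only [exSplit, List.mem_map, List.mem_product, Prod.exists] at hp
    obtain ⟨C, E, D, E', ⟨hCE, hDE⟩, rfl⟩ := hp
    obtain ⟨hC, hE⟩ := atomsAll_exSplit hP h.1 _ hCE
    obtain ⟨hD, hE'⟩ := atomsAll_exSplit hP h.2 _ hDE
    exact ⟨⟨hC, hD⟩, hP.inter hE hE'⟩
  | or a b, h, p, hp =>
    (List.mem_append.1 hp).elim (atomsAll_exSplit hP h.1 p) (atomsAll_exSplit hP h.2 p)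

theorem atomsAll_allSplit {P : LExp Λ → Prop} (hP : LExp.PosClosed P) {y : ℕ} :
    ∀ {φ : KrF Λ}, φ.AtomsAll P → ∀ p ∈ allSplit y φ, p.1.AtomsAll P ∧ P p.2
  | atom z E, h, p, hp => by
    unfold allSplit at hp
    split_ifs at hp <;> simp_all [falsum, AtomsAll, hP.bot]
  | and a b, h, p, hp =>
    (List.mem_append.1 hp).elim (atomsAll_allSplit hP h.1 p) (atomsAll_allSplit hP h.2 p)
  | or a b, h, _, hp => by
    simp only [allSplit, List.mem_map, List.mem_product, Prod.exists] at hp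
    obtain ⟨C, E, D, E', ⟨hCE, hDE⟩, rfl⟩ := hp
    obtain ⟨hC, hE⟩ := atomsAll_allSplit hP h.1 _ hCE
    obtain ⟨hD, hE'⟩ := atomsAll_allSplit hP h.2 _ hDE
    exact ⟨⟨hC, hD⟩, hP.union hE hE'⟩

def exElim (y : ℕ) (l : Λ) (x : ℕ) (φ : KrF Λ) : KrF Λ :=
  bigOr ((exSplit y φ).map fun (C, E) => C.and (atom x (.rinv l E)))

def allElim (y : ℕ) (l : Λ) (x : ℕ) (φ : KrF Λ) : KrF Λ :=
  bigAnd ((allSplit y φ).map fun (C, E) => C.or (atom x (.rbox l E)))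

section Elim
variable {F : Frame Λ} {g : ℕ → F.W} {y x : ℕ} {l : Λ} {φ : KrF Λ}

theorem holds_exElim (hq : φ.QFree) (hy : φ.AtomsAll (y ∉ ·.evars)) :
    holds F g (exElim y l x φ) ↔ ∃ w, F.R l (g x) w ∧ holds F (Function.update g y w) φ := by
  simp only [exElim, holds_bigOr, List.mem_map, Prod.exists, holds_update_iff_exSplit hq hy]
  constructor
  · rintro ⟨_, ⟨C, E, hCE, rfl⟩, hC, w, hw, hE⟩
    exact ⟨w, hw, C, E, hCE, hC, hE⟩
  · rintro ⟨w, hw, C, E, hCE, hC, hE⟩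
    exact ⟨_, ⟨C, E, hCE, rfl⟩, hC, w, hw, hE⟩

theorem holds_allElim (hq : φ.QFree) (hy : φ.AtomsAll (y ∉ ·.evars)) :
    holds F g (allElim y l x φ) ↔ ∀ w, F.R l (g x) w → holds F (Function.update g y w) φ := by
  simp only [allElim, holds_bigAnd, List.mem_map, Prod.exists, holds_update_iff_allSplit hq hy]
  constructor
  · intro h w hw p hp
    rcases h _ ⟨p.1, p.2, hp, rfl⟩ with hC | hE
    exacts [Or.inl hC, Or.inr (hE w hw)]
  · rintro h _ ⟨C, E, hCE, rfl⟩
    by_cases hC : holds F g C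
    · exact Or.inl hC
    · exact Or.inr fun w hw => (h w hw (C, E) hCE).resolve_left hC

end Elim

def elimQuant : KrF Λ → KrF Λ
  | atom z E => atom z E
  | and a b => and (elimQuant a) (elimQuant b)
  | or a b => or (elimQuant a) (elimQuant b)
  | all y l x β => allElim y l x (elimQuant β)
  | ex y l x β => exElim y l x (elimQuant β)

theorem qFree_elimQuant : ∀ φ : KrF Λ, (elimQuant φ).QFree
  | atom _ _ => trivial
  | and a b | or a b => ⟨qFree_elimQuant a, qFree_elimQuant b⟩
  | all _ _ _ _ => qFree_bigAnd <| by
    simp only [List.mem_map, Prod.exists]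
    rintro _ ⟨C, E, hCE, rfl⟩
    exact ⟨allSplit_fst_qFree _ hCE, trivial⟩
  | ex _ _ _ _ => qFree_bigOr <| by
    simp only [List.mem_map, Prod.exists]
    rintro _ ⟨C, E, hCE, rfl⟩
    exact ⟨exSplit_fst_qFree _ hCE, trivial⟩

theorem atomsAll_elimQuant {P : LExp Λ → Prop} (hP : LExp.PosClosed P) :
    ∀ {φ : KrF Λ}, φ.AtomsAll P → (elimQuant φ).AtomsAll P
  | atom _ _, h => h
  | and _ _, h | or _ _, h => ⟨atomsAll_elimQuant hP h.1, atomsAll_elimQuant hP h.2⟩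
  | all _ l _ β, h => atomsAll_bigAnd hP.top <| by
    simp only [List.mem_map, Prod.exists]
    rintro _ ⟨C, E, hCE, rfl⟩
    obtain ⟨hC, hE⟩ := atomsAll_allSplit hP (atomsAll_elimQuant hP (φ := β) h) _ hCE
    exact ⟨hC, hP.rbox l hE⟩
  | ex _ l _ β, h => atomsAll_bigOr hP.bot <| by
    simp only [List.mem_map, Prod.exists]
    rintro _ ⟨C, E, hCE, rfl⟩
    obtain ⟨hC, hE⟩ := atomsAll_exSplit hP (atomsAll_elimQuant hP (φ := β) h) _ hCE
    exact ⟨hC, hP.rinv l hE⟩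

theorem holds_elimQuant {S : Set ℕ} :
    ∀ {φ : KrF Λ}, φ.AtomsAll (·.evars ⊆ S) → Disjoint S φ.bv →
      ∀ (F : Frame Λ) (g : ℕ → F.W), holds F g (elimQuant φ) ↔ holds F g φ
  | atom _ _, _, _, _, _ => Iff.rfl
  | and a b, h, hS, F, g | or a b, h, hS, F, g => by
    rw [bv, Set.disjoint_union_right] at hS
    simp only [elimQuant, holds, holds_elimQuant h.1 hS.1, holds_elimQuant h.2 hS.2]
  | all y l x β, h, hS, F, g | ex y l x β, h, hS, F, g => by
    rw [bv, Set.disjoint_insert_right] at hS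
    have hy : (elimQuant β).AtomsAll (y ∉ ·.evars) :=
      (atomsAll_elimQuant (LExp.posClosed_evars_subset S) (φ := β) h).mono
        fun _ hE => Set.notMem_subset hE hS.1
    simp only [elimQuant, holds, holds_allElim, holds_exElim, qFree_elimQuant, hy,
      holds_elimQuant (φ := β) h hS.2]

end KrF

/-- quantifier elimination: a generalized Kracht formula with free variables
in whose atoms `y ∈ E` all variables of `E` are free is equivalent, in every Kripke frame
under every assignment, to a quantifier-free formula built from quasi-safe atoms using only
`∧` and `∨`. -/
theorem statement15 {Λ : Type u} (ψ : KrF Λ)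
    (h₁ : IsGenKrachtFV ψ)
    (h₂ : ψ.AtomsAll fun E => E.evars ⊆ ψ.fv) :
    ∃ ψ' : KrF Λ, ψ'.QFree ∧ ψ'.AtomsAll QuasiSafe ∧
      ∀ (F : Frame Λ) (g : ℕ → F.W), KrF.holds F g ψ ↔ KrF.holds F g ψ' := by
  obtain ⟨⟨hfree, -⟩, hsafe, -⟩ := h₁
  refine ⟨ψ.elimQuant, ψ.qFree_elimQuant,
    KrF.atomsAll_elimQuant LExp.posClosed_quasiSafe (hsafe.mono fun _ => QuasiSafe.safe),
    fun F g => (KrF.holds_elimQuant h₂ (Set.disjoint_iff_inter_eq_empty.mpr hfree) F g).symm⟩
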